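/- arXiv:1512.03512 — 5 statements merged into one kernel-verified Lean document; each statement's English description precedes it below -/
import Mathlib

section
/- Let P be any string of length n with δ distinct characters, where δ ≥ 1. Let 'start' be the position of the last occurrence of the character whose last occurrence in P has the smallest index, and let 'end' be the position, among first occurrences after 'start', of the character whose first occurrence to the right of 'start' has the largest index. Then every distinct character of P occurs at least once in the interval [start, end], and hence end − start + 1 ≥ δ. -/
/-- Index of the last occurrence of `c` in `P`. -/
noncomputable def lastOcc {α : Type*} (P : List α) (c : α) : ℕ :=
  sSup {i | ∃ h : i < P.length, P.get ⟨i, h⟩ = c}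

/-- Index of the first occurrence of `c` in `P` at or after position `s`. -/
noncomputable def firstOccFrom {α : Type*} (P : List α) (s : ℕ) (c : α) : ℕ :=
  sInf {i | s ≤ i ∧ ∃ h : i < P.length, P.get ⟨i, h⟩ = c}

/-!
Every character `c` still occurs at or after `start`, because `start ≤ lastOcc P c`. So the first
occurrence of `c` from `start` on lies in `[start, fin]`, and distinct characters have distinct
first occurrences; this injects the alphabet of `P` into `[start, fin]`.
-/

section
variable {α : Type*} {P : List α} {c : α} {s : ℕ}

lemma lastOcc_spec (hc : c ∈ P) :
    ∃ h : lastOcc P c < P.length, P.get ⟨lastOcc P c, h⟩ = c := by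
  obtain ⟨n, hn⟩ := List.mem_iff_get.mp hc
  exact Nat.sSup_mem (s := {i | ∃ h : i < P.length, P.get ⟨i, h⟩ = c}) ⟨n, n.2, hn⟩
    ⟨P.length, fun _ hi => hi.1.le⟩

lemma firstOccFrom_spec (hc : c ∈ P) (hs : s ≤ lastOcc P c) :
    s ≤ firstOccFrom P s c ∧
      ∃ h : firstOccFrom P s c < P.length, P.get ⟨firstOccFrom P s c, h⟩ = c :=
  Nat.sInf_mem (s := {i | s ≤ i ∧ ∃ h : i < P.length, P.get ⟨i, h⟩ = c})
    ⟨lastOcc P c, hs, lastOcc_spec hc⟩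

lemma firstOccFrom_lt_length (hc : c ∈ P) (hs : s ≤ lastOcc P c) :
    firstOccFrom P s c < P.length :=
  (firstOccFrom_spec hc hs).2.1

lemma injOn_firstOccFrom (hs : ∀ c ∈ P, s ≤ lastOcc P c) :
    Set.InjOn (firstOccFrom P s) {c | c ∈ P} := by
  intro c₁ hc₁ c₂ hc₂ heq
  obtain ⟨-, h₁, e₁⟩ := firstOccFrom_spec hc₁ (hs c₁ hc₁)
  obtain ⟨-, h₂, e₂⟩ := firstOccFrom_spec hc₂ (hs c₂ hc₂)
  rw [← e₁, ← e₂]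
  simp only [heq]

lemma sInf_lastOcc_le (hc : c ∈ P) : sInf {k | ∃ c ∈ P, k = lastOcc P c} ≤ lastOcc P c :=
  Nat.sInf_le ⟨c, hc, rfl⟩

lemma firstOccFrom_le_sSup (hs : ∀ c ∈ P, s ≤ lastOcc P c) (hc : c ∈ P) :
    firstOccFrom P s c ≤ sSup {k | ∃ c ∈ P, k = firstOccFrom P s c} := by
  refine le_csSup ⟨P.length, ?_⟩ ⟨c, hc, rfl⟩
  rintro _ ⟨c', hc', rfl⟩
  exact (firstOccFrom_lt_length hc' (hs c' hc')).le

lemma card_toFinset_le_of_firstOccFrom_le [DecidableEq α] {t : ℕ}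
    (hs : ∀ c ∈ P, s ≤ lastOcc P c) (ht : ∀ c ∈ P, firstOccFrom P s c ≤ t) :
    P.toFinset.card ≤ t + 1 - s := by
  rw [← Nat.card_Icc]
  refine Finset.card_le_card_of_injOn (firstOccFrom P s) (fun c hc => ?_) ?_
  · rw [Finset.mem_coe, List.mem_toFinset] at hc
    exact Finset.mem_Icc.mpr ⟨(firstOccFrom_spec hc (hs c hc)).1, ht c hc⟩
  · rw [List.coe_toFinset]
    exact injOn_firstOccFrom hs

end

theorem stmt1_general {α : Type*} [DecidableEq α] (P : List α)
    (δ : ℕ) (hδ : δ = P.toFinset.card)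
    (start fin : ℕ)
    (hstart : start = sInf {k | ∃ c ∈ P, k = lastOcc P c})
    (hfin : fin = sSup {k | ∃ c ∈ P, k = firstOccFrom P start c}) :
    (∀ c ∈ P, ∃ i, start ≤ i ∧ i ≤ fin ∧ ∃ h : i < P.length, P.get ⟨i, h⟩ = c) ∧
      δ ≤ fin + 1 - start := by
  have hstart_le : ∀ c ∈ P, start ≤ lastOcc P c := fun c hc => hstart ▸ sInf_lastOcc_le hc
  have hfin_ge : ∀ c ∈ P, firstOccFrom P start c ≤ fin := fun c hc =>
    hfin ▸ firstOccFrom_le_sSup hstart_le hc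
  refine ⟨fun c hc => ?_, hδ ▸ card_toFinset_le_of_firstOccFrom_le hstart_le hfin_ge⟩
  obtain ⟨hle, hget⟩ := firstOccFrom_spec hc (hstart_le c hc)
  exact ⟨firstOccFrom P start c, hle, hfin_ge c hc, hget⟩

/-- Let `start` be the position of the last occurrence of the character whose last occurrence in
`P` has the smallest index, and `fin` the largest among first occurrences after `start`.
Then every distinct character of `P` occurs in `[start, fin]`, hence `fin - start + 1 ≥ δ`. -/
theorem stmt1 {α : Type*} [DecidableEq α] (P : List α) (hP : P ≠ [])
    (δ : ℕ) (hδ : δ = P.toFinset.card) (hδ1 : 1 ≤ δ)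
    (start fin : ℕ)
    (hstart : start = sInf {k | ∃ c ∈ P, k = lastOcc P c})
    (hfin : fin = sSup {k | ∃ c ∈ P, k = firstOccFrom P start c}) :
    (∀ c ∈ P, ∃ i, start ≤ i ∧ i ≤ fin ∧ ∃ h : i < P.length, P.get ⟨i, h⟩ = c) ∧
      δ ≤ fin + 1 - start :=
  stmt1_general P δ hδ start fin hstart hfin
end

section
/- Let w be a string of length L over alphabet Σ whose last character e occurs in w only at the last position. If T is a text and position q satisfies T[q] ≠ e with T[q] = c, where c occurs in w with rightmost occurrence at distance d from the last position of w, then no occurrence of w in T ends at any position in {q, q+1, ..., q+d−1}. -/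
/-- `P` occurs in `T` starting at (0-based) position `j`. -/
def occursAt {α : Type*} (P T : List α) (j : ℕ) : Prop :=
  j + P.length ≤ T.length ∧ (T.drop j).take P.length = P

/-- `w` occurs in `T` ending at (0-based) position `q`. -/
def endsAt {α : Type*} (w T : List α) (q : ℕ) : Prop :=
  w.length ≤ q + 1 ∧ q < T.length ∧ occursAt w T (q + 1 - w.length)

/-- Let `w` be a string of length `L` whose last character `e` occurs in `w` only at the last
position. If `T[q] = c ≠ e`, where `c` occurs in `w` with rightmost occurrence at (0-based)
index `j`, i.e. at distance `d = L - 1 - j` from the last position of `w`, then no occurrence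
of `w` in `T` ends at any position in `{q, q+1, ..., q+d-1}`. -/
theorem stmt9 {α : Type*} (w T : List α) (hw : w ≠ []) (e c : α)
    (hlast : w.getLast hw = e)
    (honly : ∀ l (hl : l < w.length), l < w.length - 1 → w.get ⟨l, hl⟩ ≠ e)
    (q : ℕ) (hq : q < T.length) (hTq : T.get ⟨q, hq⟩ = c) (hce : c ≠ e)
    (j : ℕ) (hj : j < w.length) (hwj : w.get ⟨j, hj⟩ = c)
    (hright : ∀ l (hl : l < w.length), j < l → w.get ⟨l, hl⟩ ≠ c) :
    ∀ q', q ≤ q' → q' < q + (w.length - 1 - j) → ¬ endsAt w T q' := by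
  intro q' hq1 hq2 hE
  obtain ⟨hlen, hq'T, hle, hocc⟩ := hE
  set L := w.length with hL
  set s := q' + 1 - L with hs
  have hsL : s + L = q' + 1 := by omega
  have hi : q - s < L := by omega
  have hji : j < q - s := by omega
  have hi' : q - s < (List.take L (List.drop s T)).length := by
    simp [List.length_take, List.length_drop]; omega
  have key : (List.take L (List.drop s T))[q - s]'hi' = T.get ⟨q, hq⟩ := by
    simp only [List.getElem_take, List.getElem_drop, List.get_eq_getElem]
    congr 1
    omega
  simp only [hocc] at key
  have hget : w.get ⟨q - s, hi⟩ = T.get ⟨q, hq⟩ := key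
  exact hright (q - s) hi hji (hget.trans hTq)
end

section
/- Let w be a string of length L whose last character e does not occur elsewhere in w. If T[q] = e but T[q − L + 1] differs from the first character of w, then no occurrence of w in T ends at any position in {q, q+1, ..., q+L−1}. -/
/-- Let `w` be a string of length `L` whose last character `e` does not occur elsewhere in `w`.
If `T[q] = e` but `T[q - L + 1]` differs from the first character of `w`, then no occurrence of
`w` in `T` ends at any position in `{q, q+1, ..., q+L-1}`. -/
theorem stmt10 {α : Type*} (w T : List α) (hw : w ≠ []) (e : α)
    (hlast : w.getLast hw = e)
    (honly : ∀ l (hl : l < w.length), l < w.length - 1 → w.get ⟨l, hl⟩ ≠ e)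
    (q : ℕ) (hq : q < T.length) (hqL : w.length - 1 ≤ q)
    (hTq : T.get ⟨q, hq⟩ = e)
    (hhead : T.get ⟨q - (w.length - 1), lt_of_le_of_lt (Nat.sub_le _ _) hq⟩ ≠ w.head hw) :
    ∀ q', q ≤ q' → q' < q + w.length → ¬ endsAt w T q' := by
  intro q' hqq' hq'lt hend
  obtain ⟨hL, hq'T, hocc⟩ := hend
  set s := q' + 1 - w.length with hs
  obtain ⟨hsle, heq⟩ := hocc
  have hLpos : 0 < w.length := List.length_pos_iff.mpr hw
  have key : ∀ i (hi : i < w.length) (hi' : s + i < T.length),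
      w.get ⟨i, hi⟩ = T.get ⟨s + i, hi'⟩ := by
    intro i hi hi'
    have h1 := List.getElem_of_eq heq.symm hi
    simp only [List.getElem_take, List.getElem_drop] at h1
    simpa [List.get_eq_getElem] using h1
  have hsq : s ≤ q := by omega
  have hqs_lt : q - s < w.length := by omega
  have hsq' : s + w.length = q' + 1 := by omega
  have hwq : w.get ⟨q - s, hqs_lt⟩ = e := by
    have := key (q - s) hqs_lt (by omega)
    rw [this]
    have : s + (q - s) = q := by omega
    simp_rw [this]
    exact hTq
  have hlastidx : q - s = w.length - 1 := by
    by_contra h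
    exact honly (q - s) hqs_lt (by omega) hwq
  have hqq : q' = q := by omega
  subst hqq
  apply hhead
  have h0 : w.get ⟨0, hLpos⟩ = w.head hw := by
    cases w with
    | nil => exact absurd rfl hw
    | cons a l => rfl
  have := key 0 hLpos (by omega)
  rw [← h0, this]
  exact congrArg T.get (Fin.ext (by show q' - (w.length - 1) = s + 0; omega))
end

section
/- For every string P of length n with δ distinct characters, there exists a pair of characters (a, b) occurring in P such that the 2-sparse pattern sparse^{(a,b)}(P) contains every distinct character of P; hence |sparse(P)| ≥ δ. -/
/-!
Take `i` maximal such that the suffix of `P` starting at `i` still contains every letter of `P`;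
then `a = P[i]` does not occur after position `i`. Inside that suffix take the shortest prefix
containing every letter, ending at position `j`; then `b = P[j]` does not occur between `i` and `j`.
So `P[i..j]` is a 2-sparse pattern for `(a, b)` containing all `δ` distinct letters, and its length
is at least `δ`.
-/

namespace List

variable {α : Type*}

theorem getElem_mem_take_of_lt (l : List α) {k n : ℕ} (hk : k < n) (hl : k < l.length) :
    l[k] ∈ l.take n :=
  mem_take_iff_getElem.2 ⟨k, by omega, rfl⟩

theorem getElem_mem_drop_of_le (l : List α) {k n : ℕ} (hk : n ≤ k) (hl : k < l.length) :
    l[k] ∈ l.drop n :=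
  mem_drop_iff_getElem.2 ⟨k - n, by omega, by congr 1; omega⟩

theorem exists_minimal_prefix_superset {S Q : List α} (hS : S ≠ []) (hSQ : S ⊆ Q) :
    ∃ m, ∃ hm : m < Q.length, S ⊆ Q.take (m + 1) ∧ Q[m] ∉ Q.take m := by
  classical
  have hex : ∃ n, S ⊆ Q.take n := ⟨Q.length, by rwa [take_length]⟩
  obtain ⟨m, hm⟩ : ∃ m, Nat.find hex = m + 1 := Nat.exists_eq_add_one_of_ne_zero fun h0 =>
    hS (eq_nil_of_subset_nil (by simpa [h0] using Nat.find_spec hex))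
  have hcover : S ⊆ Q.take (m + 1) := hm ▸ Nat.find_spec hex
  have hshort : ¬ S ⊆ Q.take m := Nat.find_min hex (by omega)
  have hmQ : m < Q.length := by
    by_contra! hle
    rw [take_of_length_le (by omega)] at hcover
    exact hshort (by rwa [take_of_length_le hle])
  refine ⟨m, hmQ, hcover, fun hmem => hshort fun c hc => ?_⟩
  rw [take_add_one, getElem?_eq_getElem hmQ] at hcover
  rcases mem_append.1 (hcover hc) with h | h
  · exact h
  · obtain rfl : c = Q[m] := by simpa using h
    exact hmem

theorem exists_maximal_suffix_superset {S P : List α} (hS : S ≠ []) (hSP : S ⊆ P) :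
    ∃ i, ∃ hi : i < P.length, S ⊆ P.drop i ∧ P[i] ∉ P.drop (i + 1) := by
  classical
  have hex : ∃ n, ¬ S ⊆ P.drop n :=
    ⟨P.length, fun h => hS (eq_nil_of_subset_nil (by simpa using h))⟩
  obtain ⟨i, hi⟩ : ∃ i, Nat.find hex = i + 1 := Nat.exists_eq_add_one_of_ne_zero fun h0 =>
    Nat.find_spec hex (by simpa [h0] using hSP)
  have hcover : S ⊆ P.drop i := not_not.1 (Nat.find_min hex (by omega))
  have hshort : ¬ S ⊆ P.drop (i + 1) := hi ▸ Nat.find_spec hex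
  have hiP : i < P.length := by
    by_contra! hle
    exact hS (eq_nil_of_subset_nil (by simpa [drop_eq_nil_of_le hle] using hcover))
  refine ⟨i, hiP, hcover, fun hmem => hshort fun c hc => ?_⟩
  rcases mem_cons.1 (drop_eq_getElem_cons hiP ▸ hcover hc) with rfl | h
  exacts [hmem, h]

theorem exists_sparse_window_superset {S P : List α} (hS : S ≠ []) (hSP : S ⊆ P) :
    ∃ i j, ∃ hj : j < P.length, ∃ _ : i ≤ j,
      (∀ l (hl : l < P.length), i < l → l < j →
        P[l] ≠ P[i] ∧ P[l] ≠ P[j]) ∧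
      S ⊆ (P.drop i).take (j + 1 - i) := by
  obtain ⟨i, hi, hsuffix, hlast⟩ := exists_maximal_suffix_superset hS hSP
  obtain ⟨m, hm, hprefix, hfirst⟩ := exists_minimal_prefix_superset hS hsuffix
  have hj : i + m < P.length := by simp only [length_drop] at hm; omega
  refine ⟨i, i + m, hj, by omega, fun l hl hil hlj => ⟨?_, ?_⟩,
    by rwa [show i + m + 1 - i = m + 1 by omega]⟩
  · intro h
    exact hlast (h ▸ P.getElem_mem_drop_of_le hil hl)
  · intro h
    have hl' : l - i < (P.drop i).length := by simp only [length_drop]; omega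
    have hsame : (P.drop i)[l - i] = P[l] := by simp only [getElem_drop]; congr 1; omega
    apply hfirst
    rw [getElem_drop, ← h, ← hsame]
    exact getElem_mem_take_of_lt _ (by omega) hl'

theorem card_toFinset_le_length_of_subset [DecidableEq α] {S L : List α} (h : S ⊆ L) :
    S.toFinset.card ≤ L.length :=
  (Finset.card_le_card fun _ hc => mem_toFinset.2 (h (mem_toFinset.1 hc))).trans
    L.toFinset_card_le

end List

/-- For every nonempty string `P`, there is a pair of characters `(a, b)` occurring in `P` and a
substring of `P` starting with `a`, ending with `b`, with no occurrence of `a` or `b` in its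
interior (a 2-sparse pattern w.r.t. `(a,b)`), that contains every distinct character of `P`;
hence its length, and so `|sparse(P)|`, is at least `δ = P.toFinset.card`. -/
theorem stmt12 {α : Type*} [DecidableEq α] (P : List α) (hP : P ≠ []) :
    ∃ a b, a ∈ P ∧ b ∈ P ∧ ∃ i j, ∃ hj : j < P.length, ∃ hij : i ≤ j,
      P.get ⟨i, lt_of_le_of_lt hij hj⟩ = a ∧ P.get ⟨j, hj⟩ = b ∧
      (∀ l (hl : l < P.length), i < l → l < j →
        P.get ⟨l, hl⟩ ≠ a ∧ P.get ⟨l, hl⟩ ≠ b) ∧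
      (∀ c ∈ P, c ∈ (P.drop i).take (j + 1 - i)) ∧
      P.toFinset.card ≤ j + 1 - i := by
  obtain ⟨i, j, hj, hij, hsparse, hcover⟩ :=
    List.exists_sparse_window_superset hP (List.Subset.refl P)
  refine ⟨P[i], P[j], List.getElem_mem _, List.getElem_mem _, i, j, hj, hij, rfl, rfl,
    hsparse, fun c hc => hcover hc, ?_⟩
  calc P.toFinset.card ≤ ((P.drop i).take (j + 1 - i)).length :=
        List.card_toFinset_le_length_of_subset hcover
    _ ≤ j + 1 - i := List.length_take_le _ _
end

section
/- Let F : 𝒫(δ) → 𝒫(δ) be defined on strings P = (a₁,...,aₙ) with at least δ distinct characters by: F(P) = P if a₁ occurs exactly once in the prefix of P ending at the first occurrence of the (δ/2)-th distinct character; otherwise F(P) = (b₁, a₂, ..., aₙ), where b₁ is the first occurrence of the (δ/2 + r)-th distinct character of P and r is the lexical rank of a₁ among the first δ/2 distinct characters of P. Then every string Q in the image of F has the same multiset-support size (number of distinct characters) at least δ, and each Q in the image has at most two preimages under F, one of which is Q itself; consequently |F(𝒫(δ))| ≥ |𝒫(δ)|/2. -/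
/-!
Write `P = x :: t`, let `e = firsts t` and `m = δ / 2`. The first character `x` recurs before
the first occurrence of the `m`-th distinct character of `P` exactly when `x` is one of
`e[0], …, e[m-2]`.
In that case the distinct characters of `P` are those of `e`, with the first `m` of them permuted,
so `F` replaces `x` by `e[m + r - 1]`, where `r` is the rank of `x` among `e[0], …, e[m-1]`.
This new first character sits at index at least `m - 1` in `e`, hence `F` fixes `F P`; and it
determines `r`, hence `x`, so every `Q` has at most one preimage other than itself. Fibres of size
at most two give `|𝒫(δ)| ≤ 2 |F(𝒫(δ))|`.
-/

/-- The list of distinct characters of `P` in order of first occurrence. -/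
def firsts {α : Type*} [DecidableEq α] (P : List α) : List α :=
  P.reverse.dedup.reverse

/-- The map `F` of the paper: if the first character `a` of `P` occurs exactly once in the prefix
of `P` ending at the first occurrence of the `(δ/2)`-th distinct character, then `F P = P`;
otherwise the first character is replaced by `b`, the `(δ/2 + r)`-th distinct character of `P`,
where `r` is the lexical rank of `a` among the first `δ/2` distinct characters of `P`. -/
def Fmap {α : Type*} [LinearOrder α] (δ : ℕ) (P : List α) : List α :=
  match P with
  | [] => []
  | a :: t =>
    let d := firsts (a :: t)
    let half := δ / 2
    let pos := (a :: t).idxOf (d.getD (half - 1) a)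
    if ((a :: t).take (pos + 1)).count a = 1 then a :: t
    else
      let r := (d.take half |>.filter (· ≤ a)).length
      (d.getD (half + r - 1) a) :: t

open List

section Firsts

variable {α : Type*} [DecidableEq α]

theorem nodup_firsts (P : List α) : (firsts P).Nodup :=
  nodup_reverse.2 (nodup_dedup _)

@[simp] theorem mem_firsts {x : α} {P : List α} : x ∈ firsts P ↔ x ∈ P := by
  simp [firsts]

@[simp] theorem length_firsts (P : List α) : (firsts P).length = P.dedup.length := by
  rw [firsts, length_reverse]
  exact (reverse_perm P).dedup.length_eq

theorem dedup_append_singleton (a : α) (l : List α) :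
    (l ++ [a]).dedup = l.dedup.filter (· ≠ a) ++ [a] := by
  induction l with
  | nil => simp
  | cons b l ih =>
    by_cases hb : b ∈ l
    · rw [cons_append, dedup_cons_of_mem (by simp [hb]), ih, dedup_cons_of_mem hb]
    · by_cases hba : b = a
      · subst hba
        rw [cons_append, dedup_cons_of_mem (by simp), ih, dedup_cons_of_notMem hb]
        simp
      · rw [cons_append, dedup_cons_of_notMem (by simp [hb, hba]), ih,
          dedup_cons_of_notMem hb, filter_cons_of_pos (by simp [hba]), cons_append]

theorem firsts_cons (a : α) (t : List α) : firsts (a :: t) = a :: (firsts t).erase a := by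
  rw [(nodup_firsts t).erase_eq_filter, firsts, reverse_cons, dedup_append_singleton,
    reverse_append, ← filter_reverse]
  simp only [firsts, reverse_singleton, singleton_append, cons.injEq, true_and]
  exact filter_congr fun x _ => by by_cases h : x = a <;> simp [h]

theorem length_dedup_cons_le (x : α) (t : List α) :
    (x :: t).dedup.length ≤ (firsts t).length + 1 := by
  rw [← length_firsts, firsts_cons, length_cons]
  exact Nat.succ_le_succ length_erase_le

theorem getD_firsts_cons_succ (x : α) (t : List α) (k : ℕ) :
    (firsts (x :: t)).getD (k + 1) x =
      if k < (firsts t).idxOf x then (firsts t).getD k x else (firsts t).getD (k + 1) x := by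
  rw [firsts_cons, getD_cons_succ, erase_eq_eraseIdx_of_idxOf rfl, getD_eq_getElem?_getD,
    getElem?_eraseIdx]
  split <;> rfl

theorem pairwise_idxOf_firsts (t : List α) :
    (firsts t).Pairwise (fun y z => t.idxOf y < t.idxOf z) := by
  induction t with
  | nil => simp [firsts]
  | cons a t ih =>
    rw [firsts_cons]
    refine Pairwise.cons (fun z hz => ?_) ((ih.sublist (erase_sublist)).imp_of_mem ?_)
    · rw [idxOf_cons_self, idxOf_cons_ne _ (Ne.symm ((nodup_firsts t).mem_erase_iff.1 hz).1)]
      exact Nat.succ_pos _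
    · intro y z hy hz hyz
      rw [idxOf_cons_ne _ (Ne.symm ((nodup_firsts t).mem_erase_iff.1 hy).1),
        idxOf_cons_ne _ (Ne.symm ((nodup_firsts t).mem_erase_iff.1 hz).1)]
      exact Nat.succ_lt_succ hyz

theorem idxOf_lt_idxOf_of_idxOf_firsts_lt {t : List α} {y z : α}
    (h : (firsts t).idxOf y < (firsts t).idxOf z) : t.idxOf y < t.idxOf z := by
  have hy : y ∈ firsts t := idxOf_lt_length_iff.1 (h.trans_le (idxOf_le_length))
  by_cases hz : z ∈ firsts t
  · have := (pairwise_iff_getElem.1 (pairwise_idxOf_firsts t)) _ _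
      (idxOf_lt_length_iff.2 hy) (idxOf_lt_length_iff.2 hz) h
    simpa only [getElem_idxOf] using this
  · rw [(idxOf_eq_length_iff (a := z)).2 (by simpa using hz)]
    exact idxOf_lt_length_iff.2 (mem_firsts.1 hy)

theorem take_firsts_cons_perm {x : α} {t : List α} {k : ℕ} (hx : (firsts t).idxOf x < k)
    (hk : k ≤ (firsts t).length) : (firsts (x :: t)).take k ~ (firsts t).take k := by
  obtain ⟨j, rfl⟩ : ∃ j, k = j + 1 := ⟨k - 1, by omega⟩
  have hxk : x ∈ (firsts t).take (j + 1) :=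
    (mem_take_iff_idxOf_lt (idxOf_lt_length_iff.1 (by omega))).2 hx
  have hlen : (((firsts t).take (j + 1)).erase x).length = j := by
    rw [length_erase_of_mem hxk, length_take]
    omega
  conv_lhs => rw [firsts_cons, take_succ_cons, ← take_append_drop (j + 1) (firsts t),
    erase_append_left _ hxk, take_left' hlen]
  exact (perm_cons_erase hxk).symm

theorem count_take_succ_idxOf_cons_eq_one {x c : α} {t : List α} (hc : c ≠ x) (hct : c ∈ t) :
    ((x :: t).take ((x :: t).idxOf c + 1)).count x = 1 ↔ t.idxOf c < t.idxOf x := by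
  rw [idxOf_cons_ne _ (Ne.symm hc), take_succ_cons, count_cons_self, Nat.add_eq_right,
    count_eq_zero, not_iff_comm, not_lt]
  by_cases hxt : x ∈ t
  · rw [mem_take_iff_idxOf_lt hxt, Nat.lt_succ_iff]
  · rw [(idxOf_eq_length_iff (a := x)).2 hxt]
    exact iff_of_false (by have := idxOf_lt_length_iff.2 hct; omega)
      fun h => hxt (mem_of_mem_take h)

end Firsts

section LexRank

variable {α : Type*} [LinearOrder α]

def lexRank (x : α) (s : List α) : ℕ :=
  (s.filter (· ≤ x)).length

theorem lexRank_le_length (x : α) (s : List α) : lexRank x s ≤ s.length :=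
  length_filter_le _ _

theorem List.Perm.lexRank_eq {s s' : List α} (h : s ~ s') (x : α) :
    lexRank x s = lexRank x s' :=
  (h.filter _).length_eq

theorem lexRank_lt_lexRank {y z : α} {s : List α} (hz : z ∈ s) (h : y < z) :
    lexRank y s < lexRank z s := by
  have hsub : s.filter (· ≤ y) <+ s.filter (· ≤ z) :=
    monotone_filter_right s fun a ha => by simpa using (of_decide_eq_true ha).trans h.le
  refine lt_of_le_of_ne hsub.length_le fun heq => ?_
  have hz' : z ∈ s.filter (· ≤ y) := (hsub.eq_of_length heq) ▸ mem_filter.2 ⟨hz, by simp⟩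
  exact absurd (of_decide_eq_true (mem_filter.1 hz').2) (not_le.2 h)

theorem eq_of_lexRank_eq {y z : α} {s : List α} (hy : y ∈ s) (hz : z ∈ s)
    (h : lexRank y s = lexRank z s) : y = z := by
  rcases lt_trichotomy y z with hyz | hyz | hyz
  · exact absurd h (lexRank_lt_lexRank hz hyz).ne
  · exact hyz
  · exact absurd h (lexRank_lt_lexRank hy hyz).ne'

end LexRank

section Fmap

variable {α : Type*} [LinearOrder α] {δ : ℕ} {x : α} {t : List α}

theorem Fmap_cons_of_le_idxOf (hlen : δ / 2 ≤ (x :: t).dedup.length)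
    (hx : δ / 2 - 1 ≤ (firsts t).idxOf x) : Fmap δ (x :: t) = x :: t := by
  rw [Fmap, if_pos]
  obtain hm | hm := le_or_gt (δ / 2) 1
  · rw [show δ / 2 - 1 = 0 by omega, firsts_cons, getD_cons_zero, idxOf_cons_self]
    simp
  obtain ⟨k, hk⟩ : ∃ k, δ / 2 - 1 = k + 1 := ⟨δ / 2 - 2, by omega⟩
  have hke : k < (firsts t).length := by have := length_dedup_cons_le x t; omega
  have hidx : (firsts t).idxOf (firsts t)[k] = k := (nodup_firsts t).idxOf_getElem k hke
  have hne : (firsts t)[k] ≠ x := fun h => by rw [h] at hidx; omega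
  rw [hk, getD_firsts_cons_succ, if_pos (by omega), getD_eq_getElem _ _ hke,
    count_take_succ_idxOf_cons_eq_one hne (mem_firsts.1 (getElem_mem hke))]
  exact idxOf_lt_idxOf_of_idxOf_firsts_lt (by omega)

def replacementIdx (δ : ℕ) (x : α) (t : List α) : ℕ :=
  δ / 2 + lexRank x ((firsts t).take (δ / 2)) - 1

theorem Fmap_cons_of_idxOf_lt (hlen : δ ≤ (x :: t).dedup.length)
    (hx : (firsts t).idxOf x < δ / 2 - 1) :
    ∃ hk : replacementIdx δ x t < (firsts t).length,
      Fmap δ (x :: t) = (firsts t)[replacementIdx δ x t] :: t := by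
  have hxt : x ∈ t := mem_firsts.1 <| idxOf_lt_length_iff.1 <| by
    have := length_dedup_cons_le x t
    have := Nat.mul_div_le δ 2
    omega
  have hle : 2 * (δ / 2) ≤ (firsts t).length := by
    rw [length_firsts, ← dedup_cons_of_mem hxt]
    exact (Nat.mul_div_le δ 2).trans hlen
  have hrank : lexRank x ((firsts t).take (δ / 2)) ≤ δ / 2 :=
    (lexRank_le_length _ _).trans (length_take_le _ _)
  have hlt : replacementIdx δ x t < (firsts t).length := by unfold replacementIdx; omega
  refine ⟨hlt, ?_⟩
  obtain ⟨k, hk⟩ : ∃ k, δ / 2 - 1 = k + 1 := ⟨δ / 2 - 2, by omega⟩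
  have hke : k + 1 < (firsts t).length := by omega
  have hidx : (firsts t).idxOf (firsts t)[k + 1] = k + 1 :=
    (nodup_firsts t).idxOf_getElem _ hke
  have hne : (firsts t)[k + 1] ≠ x := fun h => by rw [h] at hidx; omega
  rw [Fmap, if_neg]
  · change (firsts (x :: t)).getD (δ / 2 + lexRank x ((firsts (x :: t)).take (δ / 2)) - 1) x
      :: t = _
    rw [(take_firsts_cons_perm (t := t) (k := δ / 2) (by omega) (by omega)).lexRank_eq x,
      ← getD_eq_getElem _ x hlt]
    obtain ⟨j, hj⟩ : ∃ j, δ / 2 + lexRank x ((firsts t).take (δ / 2)) - 1 = j + 1 :=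
      ⟨δ / 2 + lexRank x ((firsts t).take (δ / 2)) - 2, by omega⟩
    rw [replacementIdx, hj, getD_firsts_cons_succ, if_neg (by omega)]
  rw [hk, getD_firsts_cons_succ, if_neg (by omega), getD_eq_getElem _ _ hke,
    count_take_succ_idxOf_cons_eq_one hne (mem_firsts.1 (getElem_mem hke)), not_lt]
  exact (idxOf_lt_idxOf_of_idxOf_firsts_lt (by omega)).le

theorem tail_Fmap (P : List α) : (Fmap δ P).tail = P.tail := by
  cases P with
  | nil => rfl
  | cons x t => rw [Fmap]; split <;> rfl

theorem length_Fmap (P : List α) : (Fmap δ P).length = P.length := by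
  cases P with
  | nil => rfl
  | cons x t => rw [Fmap]; split <;> rfl

theorem length_dedup_Fmap {P : List α} (hlen : δ ≤ P.dedup.length) :
    (Fmap δ P).dedup.length = P.dedup.length := by
  obtain _ | ⟨x, t⟩ := P
  · rfl
  obtain hx | hx := le_or_gt (δ / 2 - 1) ((firsts t).idxOf x)
  · rw [Fmap_cons_of_le_idxOf ((Nat.div_le_self δ 2).trans hlen) hx]
  obtain ⟨hk, hF⟩ := Fmap_cons_of_idxOf_lt hlen hx
  have hxt : x ∈ t := mem_firsts.1 (idxOf_lt_length_iff.1 (by unfold replacementIdx at hk; omega))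
  rw [hF, dedup_cons_of_mem (mem_firsts.1 (getElem_mem hk)), dedup_cons_of_mem hxt]

theorem Fmap_Fmap {P : List α} (hlen : δ ≤ P.dedup.length) :
    Fmap δ (Fmap δ P) = Fmap δ P := by
  obtain _ | ⟨x, t⟩ := P
  · rfl
  obtain hx | hx := le_or_gt (δ / 2 - 1) ((firsts t).idxOf x)
  · rw [Fmap_cons_of_le_idxOf ((Nat.div_le_self δ 2).trans hlen) hx,
      Fmap_cons_of_le_idxOf ((Nat.div_le_self δ 2).trans hlen) hx]
  obtain ⟨hk, hF⟩ := Fmap_cons_of_idxOf_lt hlen hx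
  rw [hF]
  apply Fmap_cons_of_le_idxOf
  · rw [dedup_cons_of_mem (mem_firsts.1 (getElem_mem hk)), ← length_firsts]
    unfold replacementIdx at hk
    omega
  · rw [(nodup_firsts t).idxOf_getElem]
    unfold replacementIdx
    omega

theorem eq_of_Fmap_eq {P P' : List α} (hlen : δ ≤ P.dedup.length)
    (hlen' : δ ≤ P'.dedup.length) (hP : Fmap δ P ≠ P) (hP' : Fmap δ P' ≠ P')
    (h : Fmap δ P = Fmap δ P') : P = P' := by
  obtain _ | ⟨x, t⟩ := P
  · exact absurd rfl hP
  obtain _ | ⟨x', t'⟩ := P'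
  · exact absurd rfl hP'
  obtain rfl : t = t' := by simpa only [tail_Fmap, tail_cons] using congrArg tail h
  have hx : (firsts t).idxOf x < δ / 2 - 1 :=
    lt_of_not_ge fun hx => hP (Fmap_cons_of_le_idxOf ((Nat.div_le_self δ 2).trans hlen) hx)
  have hx' : (firsts t).idxOf x' < δ / 2 - 1 :=
    lt_of_not_ge fun hx => hP' (Fmap_cons_of_le_idxOf ((Nat.div_le_self δ 2).trans hlen') hx)
  obtain ⟨hk, hF⟩ := Fmap_cons_of_idxOf_lt hlen hx
  obtain ⟨hk', hF'⟩ := Fmap_cons_of_idxOf_lt hlen' hx'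
  rw [hF, hF', cons.injEq, (nodup_firsts t).getElem_inj_iff] at h
  unfold replacementIdx at h hk
  have hrank : lexRank x ((firsts t).take (δ / 2)) = lexRank x' ((firsts t).take (δ / 2)) := by
    omega
  have hmem {y : α} (hy : (firsts t).idxOf y < δ / 2 - 1) : y ∈ (firsts t).take (δ / 2) :=
    (mem_take_iff_idxOf_lt (idxOf_lt_length_iff.1 (by omega))).2 (by omega)
  rw [eq_of_lexRank_eq (hmem hx) (hmem hx') hrank]

end Fmap

theorem Set.ncard_fiber_le_two {β : Type*} {f : β → β} {S : Set β}
    (hf : ∀ P ∈ S, ∀ P' ∈ S, f P ≠ P → f P' ≠ P' → f P = f P' → P = P') (Q : β) :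
    {P | P ∈ S ∧ f P = Q}.ncard ≤ 2 := by
  have hsub : {P | P ∈ S ∧ f P = Q} ⊆ insert Q {P | P ∈ S ∧ f P = Q ∧ f P ≠ P} := by
    rintro P ⟨hP, rfl⟩
    by_cases hfix : f P = P
    · exact Or.inl hfix.symm
    · exact Or.inr ⟨hP, rfl, hfix⟩
  have hsing : {P | P ∈ S ∧ f P = Q ∧ f P ≠ P}.Subsingleton := by
    rintro P ⟨hP, hPQ, hPfix⟩ P' ⟨hP', hP'Q, hP'fix⟩
    exact hf P hP P' hP' hPfix hP'fix (hPQ.trans hP'Q.symm)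
  calc {P | P ∈ S ∧ f P = Q}.ncard
      ≤ (insert Q {P | P ∈ S ∧ f P = Q ∧ f P ≠ P}).ncard :=
        Set.ncard_le_ncard hsub (hsing.finite.insert Q)
    _ ≤ {P | P ∈ S ∧ f P = Q ∧ f P ≠ P}.ncard + 1 := Set.ncard_insert_le _ _
    _ ≤ 2 := by have := (Set.ncard_le_one hsing.finite).2 fun a ha b hb => hsing ha hb; omega

theorem Set.ncard_le_mul_ncard_image {β γ : Type*} {f : β → γ} {S : Set β} {k : ℕ}
    (hf : ∀ Q ∈ f '' S, {P | P ∈ S ∧ f P = Q}.ncard ≤ k) : S.ncard ≤ k * (f '' S).ncard := by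
  classical
  obtain hS | hS := S.finite_or_infinite
  · obtain ⟨s, rfl⟩ := hS.exists_finset_coe
    rw [← Finset.coe_image, Set.ncard_coe_finset, Set.ncard_coe_finset]
    refine Finset.card_le_mul_card_image _ _ fun Q hQ => ?_
    rw [← Set.ncard_coe_finset, Finset.coe_filter]
    simpa using hf Q (by simpa using hQ)
  · rw [hS.ncard]
    exact Nat.zero_le _

theorem stmt16_general {α : Type*} [LinearOrder α] (n δ : ℕ)
    (Pset : Set (List α)) (hPset : Pset = {P : List α | P.length = n ∧ δ ≤ P.dedup.length}) :
    (∀ Q ∈ Fmap δ '' Pset, Q.length = n ∧ δ ≤ Q.dedup.length) ∧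
    (∀ Q ∈ Fmap δ '' Pset,
      {P | P ∈ Pset ∧ Fmap δ P = Q}.ncard ≤ 2 ∧ Q ∈ Pset ∧ Fmap δ Q = Q) ∧
    Pset.ncard ≤ 2 * (Fmap δ '' Pset).ncard := by
  have hmem {P : List α} (hP : P ∈ Pset) : P.length = n ∧ δ ≤ P.dedup.length := by
    rwa [hPset] at hP
  have hmaps {P : List α} (hP : P ∈ Pset) : Fmap δ P ∈ Pset :=
    hPset ▸ ⟨(length_Fmap P).trans (hmem hP).1,
      (length_dedup_Fmap (hmem hP).2).symm ▸ (hmem hP).2⟩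
  have hfiber := Set.ncard_fiber_le_two fun P hP P' hP' => eq_of_Fmap_eq (hmem hP).2 (hmem hP').2
  refine ⟨fun Q ⟨P, hP, hQ⟩ => hmem (hQ ▸ hmaps hP),
    fun Q ⟨P, hP, hQ⟩ => ⟨hfiber Q, hQ ▸ hmaps hP, hQ ▸ Fmap_Fmap (hmem hP).2⟩,
    Set.ncard_le_mul_ncard_image fun Q _ => hfiber Q⟩

/-- Every string in the image of `F` on `𝒫(δ)` (length-`n` strings with at least `δ` distinct
characters) again has length `n` and at least `δ` distinct characters; each `Q` in the image has
at most two preimages, one of which is `Q` itself; consequently `|F(𝒫(δ))| ≥ |𝒫(δ)|/2`. -/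
theorem stmt16 {α : Type*} [LinearOrder α] [Fintype α] (n δ Δ : ℕ)
    (hΔ : Fintype.card α = Δ) (hδeven : Even δ) (hδΔ : δ ≤ Δ) (hδpos : 0 < δ)
    (Pset : Set (List α)) (hPset : Pset = {P : List α | P.length = n ∧ δ ≤ P.dedup.length}) :
    (∀ Q ∈ Fmap δ '' Pset, Q.length = n ∧ δ ≤ Q.dedup.length) ∧
    (∀ Q ∈ Fmap δ '' Pset,
      {P | P ∈ Pset ∧ Fmap δ P = Q}.ncard ≤ 2 ∧ Q ∈ Pset ∧ Fmap δ Q = Q) ∧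
    Pset.ncard ≤ 2 * (Fmap δ '' Pset).ncard :=
  stmt16_general n δ Pset hPset
end
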